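/- arXiv:2211.13626 — 3 statements merged into one kernel-verified Lean document; each statement's English description precedes it below -/
import Mathlib

section
/- Let G be a first-price poorman parity bidding game with initial vertex v, and suppose a threshold ratio Th(v) exists at v. Let β and γ be finitely supported probability distributions over positive initial budgets for Player 1 and Player 2 respectively, and let W = {(B, C) ∈ supp(β) × supp(γ) : Th(v) < B/(B+C)}. Then: (i) there exists a collection (f_B ∈ S_1(B))_{B∈supp(β)} of Player 1 strategies such that for every collection (g_C ∈ S_2(C))_{C∈supp(γ)} of Player 2 strategies and every (B, C) ∈ W, the play from v induced by f_B and g_C is winning for Player 1; and (ii) there exists a collection (g_C ∈ S_2(C))_{C∈supp(γ)} such that for every collection (f_B ∈ S_1(B))_{B∈supp(β)} and every (B, C) ∈ (supp(β) × supp(γ)) \ W, the play from v induced by f_B and g_C is winning for Player 2. In particular, the value of the partial-information game at v — the optimal probability with which Player 1 wins when the initial budgets are drawn independently from β and γ — equals Σ_{(B,C)∈W} β(B)·γ(C). -/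
open Filter Finset

noncomputable section

variable {V : Type}

/-- A history: the list of rounds played so far; each round records the vertex
at which the bidding took place, Player 1's bid and Player 2's bid. -/
abbrev GHist (V : Type) : Type := List (V × ℝ × ℝ)

/-- A pure strategy: given the history and the current vertex, produce a bid
and the vertex to move to upon winning the bidding. -/
abbrev GStrat (V : Type) : Type := GHist V → V → ℝ × V

/-- One bidding round: both players bid; the higher bidder moves the token
(ties are resolved in favor of Player 2). -/
def gstep (f g : GStrat V) (hv : GHist V × V) : GHist V × V :=
  (hv.1 ++ [(hv.2, (f hv.1 hv.2).1, (g hv.1 hv.2).1)],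
    if (g hv.1 hv.2).1 < (f hv.1 hv.2).1 then (f hv.1 hv.2).2 else (g hv.1 hv.2).2)

/-- The history and current vertex after `n` rounds of the play induced by the
Player 1 strategy `f` and the Player 2 strategy `g` from the initial vertex `v0`. -/
def ghist (f g : GStrat V) (v0 : V) : ℕ → GHist V × V
  | 0 => ([], v0)
  | n + 1 => gstep f g (ghist f g v0 n)

/-- The vertex visited at time `n`. -/
def gvtx (f g : GStrat V) (v0 : V) (n : ℕ) : V := (ghist f g v0 n).2

/-- First-price bidding: only the winner pays (to the bank, under poorman
bidding).  Player 1's total investment along a history. -/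
def p1Spent (h : GHist V) : ℝ := (h.map fun r => if r.2.2 < r.2.1 then r.2.1 else 0).sum

/-- Player 2's total investment along a history. -/
def p2Spent (h : GHist V) : ℝ := (h.map fun r => if r.2.2 < r.2.1 then 0 else r.2.2).sum

/-- `f ∈ S_1(B)` under first-price poorman bidding, on the graph with edge
relation `E`: along any play consistent with `f`, all prescribed bids are
nonnegative and within Player 1's remaining budget (initial budget `B`), and
all prescribed moves follow edges of the graph. -/
def p1Legal (E : V → V → Prop) (f : GStrat V) (B : ℝ) : Prop :=
  ∀ g : GStrat V, ∀ v0 : V, ∀ n : ℕ,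
    0 ≤ (f (ghist f g v0 n).1 (ghist f g v0 n).2).1 ∧
    (f (ghist f g v0 n).1 (ghist f g v0 n).2).1 ≤ B - p1Spent (ghist f g v0 n).1 ∧
    E (ghist f g v0 n).2 (f (ghist f g v0 n).1 (ghist f g v0 n).2).2

/-- `g ∈ S_2(C)` under first-price poorman bidding. -/
def p2Legal (E : V → V → Prop) (g : GStrat V) (C : ℝ) : Prop :=
  ∀ f : GStrat V, ∀ v0 : V, ∀ n : ℕ,
    0 ≤ (g (ghist f g v0 n).1 (ghist f g v0 n).2).1 ∧
    (g (ghist f g v0 n).1 (ghist f g v0 n).2).1 ≤ C - p2Spent (ghist f g v0 n).1 ∧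
    E (ghist f g v0 n).2 (g (ghist f g v0 n).1 (ghist f g v0 n).2).2

/-- The parity objective with index labeling `idx`: Player 1 wins the play `π`
iff the highest index visited infinitely often is odd. -/
def P1Wins (idx : V → ℕ) (π : ℕ → V) : Prop :=
  Odd (sSup {k : ℕ | ∃ᶠ m in Filter.atTop, idx (π m) = k})

/-- A finitely supported budget distribution over positive reals. -/
structure BudgetDist where
  supp : Finset ℝ
  prob : ℝ → ℝ
  supp_pos : ∀ b ∈ supp, 0 < b
  prob_pos : ∀ b ∈ supp, 0 < prob b
  prob_sum : ∑ b ∈ supp, prob b = 1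

theorem p1Legal.mono {E : V → V → Prop} {f : GStrat V} {B B' : ℝ} (hf : p1Legal E f B)
    (h : B ≤ B') : p1Legal E f B' := fun g v0 n =>
  ⟨(hf g v0 n).1, (hf g v0 n).2.1.trans (by linarith), (hf g v0 n).2.2⟩

theorem p2Legal.mono {E : V → V → Prop} {g : GStrat V} {C C' : ℝ} (hg : p2Legal E g C)
    (h : C ≤ C') : p2Legal E g C' := fun f v0 n =>
  ⟨(hg f v0 n).1, (hg f v0 n).2.1.trans (by linarith), (hg f v0 n).2.2⟩

def idleStrat (E : V → V → Prop) (hE : ∀ u : V, ∃ w : V, E u w) : GStrat V :=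
  fun _ u => (0, (hE u).choose)

theorem p1Spent_ghist_idleStrat (E : V → V → Prop) (hE : ∀ u : V, ∃ w : V, E u w)
    (g : GStrat V) (v0 : V) (n : ℕ) : p1Spent (ghist (idleStrat E hE) g v0 n).1 = 0 := by
  induction n with
  | zero => simp [ghist, p1Spent]
  | succ n ih =>
    simp only [ghist, gstep, p1Spent, List.map_append, List.sum_append] at ih ⊢
    simp [ih, idleStrat]

theorem p2Spent_ghist_idleStrat (E : V → V → Prop) (hE : ∀ u : V, ∃ w : V, E u w)
    (f : GStrat V) (v0 : V) (n : ℕ) : p2Spent (ghist f (idleStrat E hE) v0 n).1 = 0 := by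
  induction n with
  | zero => simp [ghist, p2Spent]
  | succ n ih =>
    simp only [ghist, gstep, p2Spent, List.map_append, List.sum_append] at ih ⊢
    simp [ih, idleStrat]

theorem p1Legal_idleStrat {E : V → V → Prop} (hE : ∀ u : V, ∃ w : V, E u w) {B : ℝ}
    (hB : 0 ≤ B) : p1Legal E (idleStrat E hE) B := fun g v0 n =>
  ⟨le_rfl, by simpa [p1Spent_ghist_idleStrat, idleStrat] using hB, (hE _).choose_spec⟩

theorem p2Legal_idleStrat {E : V → V → Prop} (hE : ∀ u : V, ∃ w : V, E u w) {C : ℝ}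
    (hC : 0 ≤ C) : p2Legal E (idleStrat E hE) C := fun f v0 n =>
  ⟨le_rfl, by simpa [p2Spent_ghist_idleStrat, idleStrat] using hC, (hE _).choose_spec⟩

/-- Against finitely many opponent budgets it suffices to beat the largest one, since an opponent
strategy legal for a budget stays legal for any larger budget. -/
theorem exists_forall_mem_finset_win {σ τ : Type*} {L₁ : σ → Prop} {L₂ : τ → ℝ → Prop}
    {Win : σ → τ → Prop} (hL₂ : ∀ y c c', c ≤ c' → L₂ y c → L₂ y c') (T : Finset ℝ)
    (hwin : ∀ c ∈ T, ∃ x, L₁ x ∧ ∀ y, L₂ y c → Win x y) (hL₁ : ∃ x, L₁ x) :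
    ∃ x, L₁ x ∧ ∀ c ∈ T, ∀ y, L₂ y c → Win x y := by
  rcases T.eq_empty_or_nonempty with rfl | hT
  · obtain ⟨x, hx⟩ := hL₁
    exact ⟨x, hx, by simp⟩
  · obtain ⟨x, hx, hxwin⟩ := hwin _ (T.max'_mem hT)
    exact ⟨x, hx, fun c hc y hy => hxwin y (hL₂ y c _ (T.le_max' c hc) hy)⟩

section Threshold

variable {E : V → V → Prop} {idx : V → ℕ} {v : V} {Th : ℝ}

theorem exists_p1_collection_win_above (hE : ∀ u : V, ∃ w : V, E u w)
    (hThUp : ∀ B C : ℝ, 0 < B → 0 < C → Th < B / (B + C) →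
      ∃ f : GStrat V, p1Legal E f B ∧ ∀ g : GStrat V, p2Legal E g C →
        P1Wins idx (fun m => gvtx f g v m))
    (β γ : BudgetDist) :
    ∃ F : ℝ → GStrat V, ∀ B ∈ β.supp, p1Legal E (F B) B ∧
      ∀ C ∈ γ.supp, Th < B / (B + C) → ∀ g : GStrat V, p2Legal E g C →
        P1Wins idx (fun m => gvtx (F B) g v m) := by
  have hcoll : ∀ B : ℝ, ∃ f : GStrat V, B ∈ β.supp → p1Legal E f B ∧
      ∀ C ∈ γ.supp, Th < B / (B + C) → ∀ g : GStrat V, p2Legal E g C →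
        P1Wins idx (fun m => gvtx f g v m) := by
    intro B
    by_cases hB : B ∈ β.supp
    · obtain ⟨f, hf, hwin⟩ := exists_forall_mem_finset_win (L₁ := (p1Legal E · B))
        (fun g _ _ h hg => hg.mono h) (γ.supp.filter fun C => Th < B / (B + C))
        (fun C hC => hThUp B C (β.supp_pos B hB) (γ.supp_pos C (mem_filter.1 hC).1)
          (mem_filter.1 hC).2)
        ⟨_, p1Legal_idleStrat hE (β.supp_pos B hB).le⟩
      exact ⟨f, fun _ => ⟨hf, fun C hC hTh => hwin C (mem_filter.2 ⟨hC, hTh⟩)⟩⟩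
    · exact ⟨idleStrat E hE, fun h => absurd h hB⟩
  choose F hF using hcoll
  exact ⟨F, hF⟩

theorem exists_p2_collection_win_below (hE : ∀ u : V, ∃ w : V, E u w)
    (hThLow : ∀ B C : ℝ, 0 < B → 0 < C → B / (B + C) ≤ Th →
      ∃ g : GStrat V, p2Legal E g C ∧ ∀ f : GStrat V, p1Legal E f B →
        ¬ P1Wins idx (fun m => gvtx f g v m))
    (β γ : BudgetDist) :
    ∃ G : ℝ → GStrat V, ∀ C ∈ γ.supp, p2Legal E (G C) C ∧
      ∀ B ∈ β.supp, B / (B + C) ≤ Th → ∀ f : GStrat V, p1Legal E f B →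
        ¬ P1Wins idx (fun m => gvtx f (G C) v m) := by
  have hcoll : ∀ C : ℝ, ∃ g : GStrat V, C ∈ γ.supp → p2Legal E g C ∧
      ∀ B ∈ β.supp, B / (B + C) ≤ Th → ∀ f : GStrat V, p1Legal E f B →
        ¬ P1Wins idx (fun m => gvtx f g v m) := by
    intro C
    by_cases hC : C ∈ γ.supp
    · obtain ⟨g, hg, hwin⟩ := exists_forall_mem_finset_win (L₁ := (p2Legal E · C))
        (Win := fun g f => ¬ P1Wins idx (fun m => gvtx f g v m))
        (fun f _ _ h hf => hf.mono h) (β.supp.filter fun B => B / (B + C) ≤ Th)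
        (fun B hB => hThLow B C (β.supp_pos B (mem_filter.1 hB).1) (γ.supp_pos C hC)
          (mem_filter.1 hB).2)
        ⟨_, p2Legal_idleStrat hE (γ.supp_pos C hC).le⟩
      exact ⟨g, fun _ => ⟨hg, fun B hB hTh => hwin B (mem_filter.2 ⟨hB, hTh⟩)⟩⟩
    · exact ⟨idleStrat E hE, fun h => absurd h hC⟩
  choose G hG using hcoll
  exact ⟨G, hG⟩

end Threshold

theorem sum_mul_ite_eq_sum_filter {ι R : Type*} [NonAssocSemiring R] (s : Finset ι) (w : ι → R)
    (q : ι → Prop) [DecidablePred q] :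
    ∑ i ∈ s, w i * (if q i then 1 else 0) = ∑ i ∈ s.filter q, w i := by
  simp only [mul_ite, mul_one, mul_zero, sum_filter]

theorem BudgetDist.prob_mul_prob_nonneg (β γ : BudgetDist) {p : ℝ × ℝ}
    (hp : p ∈ β.supp ×ˢ γ.supp) : 0 ≤ β.prob p.1 * γ.prob p.2 :=
  mul_nonneg (β.prob_pos _ (mem_product.1 hp).1).le (γ.prob_pos _ (mem_product.1 hp).2).le

open Classical in
theorem stmt_0_general (E : V → V → Prop) (hE : ∀ u : V, ∃ w : V, E u w)
    (idx : V → ℕ) (v : V) (Th : ℝ)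
    (hThUp : ∀ B C : ℝ, 0 < B → 0 < C → Th < B / (B + C) →
      ∃ f : GStrat V, p1Legal E f B ∧ ∀ g : GStrat V, p2Legal E g C →
        P1Wins idx (fun m => gvtx f g v m))
    (hThLow : ∀ B C : ℝ, 0 < B → 0 < C → B / (B + C) ≤ Th →
      ∃ g : GStrat V, p2Legal E g C ∧ ∀ f : GStrat V, p1Legal E f B →
        ¬ P1Wins idx (fun m => gvtx f g v m))
    (β γ : BudgetDist)
    (W : Finset (ℝ × ℝ))
    (hW : W = (β.supp ×ˢ γ.supp).filter fun p => Th < p.1 / (p.1 + p.2)) :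
    (∃ F : ℝ → GStrat V, (∀ B ∈ β.supp, p1Legal E (F B) B) ∧
      ∀ G : ℝ → GStrat V, (∀ C ∈ γ.supp, p2Legal E (G C) C) →
        ∀ p ∈ W, P1Wins idx (fun m => gvtx (F p.1) (G p.2) v m)) ∧
    (∃ G : ℝ → GStrat V, (∀ C ∈ γ.supp, p2Legal E (G C) C) ∧
      ∀ F : ℝ → GStrat V, (∀ B ∈ β.supp, p1Legal E (F B) B) →
        ∀ p ∈ (β.supp ×ˢ γ.supp) \ W,
          ¬ P1Wins idx (fun m => gvtx (F p.1) (G p.2) v m)) ∧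
    (∃ F : ℝ → GStrat V, (∀ B ∈ β.supp, p1Legal E (F B) B) ∧
      ∀ G : ℝ → GStrat V, (∀ C ∈ γ.supp, p2Legal E (G C) C) →
        ∑ p ∈ W, β.prob p.1 * γ.prob p.2 ≤
          ∑ p ∈ β.supp ×ˢ γ.supp, β.prob p.1 * γ.prob p.2 *
            (if P1Wins idx (fun m => gvtx (F p.1) (G p.2) v m) then 1 else 0)) ∧
    (∃ G : ℝ → GStrat V, (∀ C ∈ γ.supp, p2Legal E (G C) C) ∧
      ∀ F : ℝ → GStrat V, (∀ B ∈ β.supp, p1Legal E (F B) B) →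
        ∑ p ∈ β.supp ×ˢ γ.supp, β.prob p.1 * γ.prob p.2 *
            (if P1Wins idx (fun m => gvtx (F p.1) (G p.2) v m) then 1 else 0) ≤
          ∑ p ∈ W, β.prob p.1 * γ.prob p.2) := by
  obtain ⟨F, hF⟩ := exists_p1_collection_win_above hE hThUp β γ
  obtain ⟨G, hG⟩ := exists_p2_collection_win_below hE hThLow β γ
  have hWsub : W ⊆ β.supp ×ˢ γ.supp := hW ▸ filter_subset _ _
  have hFwin : ∀ G' : ℝ → GStrat V, (∀ C ∈ γ.supp, p2Legal E (G' C) C) →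
      ∀ p ∈ W, P1Wins idx (fun m => gvtx (F p.1) (G' p.2) v m) := by
    intro G' hG' p hp
    obtain ⟨hpβγ, hTh⟩ := mem_filter.1 (hW ▸ hp)
    obtain ⟨hB, hC⟩ := mem_product.1 hpβγ
    exact (hF p.1 hB).2 p.2 hC hTh _ (hG' p.2 hC)
  have hGwin : ∀ F' : ℝ → GStrat V, (∀ B ∈ β.supp, p1Legal E (F' B) B) →
      ∀ p ∈ (β.supp ×ˢ γ.supp) \ W, ¬ P1Wins idx (fun m => gvtx (F' p.1) (G p.2) v m) := by
    intro F' hF' p hp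
    obtain ⟨hpβγ, hpW⟩ := mem_sdiff.1 hp
    obtain ⟨hB, hC⟩ := mem_product.1 hpβγ
    have hTh : p.1 / (p.1 + p.2) ≤ Th := not_lt.1 fun h => hpW (hW ▸ mem_filter.2 ⟨hpβγ, h⟩)
    exact (hG p.2 hC).2 p.1 hB hTh _ (hF' p.1 hB)
  refine ⟨⟨F, fun B hB => (hF B hB).1, hFwin⟩, ⟨G, fun C hC => (hG C hC).1, hGwin⟩,
    ⟨F, fun B hB => (hF B hB).1, fun G' hG' => ?_⟩,
    ⟨G, fun C hC => (hG C hC).1, fun F' hF' => ?_⟩⟩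
  · rw [sum_mul_ite_eq_sum_filter]
    exact sum_le_sum_of_subset_of_nonneg (fun p hp => mem_filter.2 ⟨hWsub hp, hFwin G' hG' p hp⟩)
      fun p hp _ => β.prob_mul_prob_nonneg γ (mem_filter.1 hp).1
  · rw [sum_mul_ite_eq_sum_filter]
    refine sum_le_sum_of_subset_of_nonneg (fun p hp => ?_)
      fun p hp _ => β.prob_mul_prob_nonneg γ (hWsub hp)
    obtain ⟨hpβγ, hwin⟩ := mem_filter.1 hp
    by_contra hpW
    exact hGwin F' hF' p (mem_sdiff.2 ⟨hpβγ, hpW⟩) hwin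

open Classical in
/-- partial-information parity first-price (poorman) bidding
games.  Let `Th` be a threshold ratio at the initial vertex `v` of a finite
parity bidding game, let `β, γ` be finitely supported budget distributions for
the two players, and `W = {(B, C) ∈ supp β × supp γ : Th < B/(B+C)}`.  Then:
(i) Player 1 has a collection of strategies winning uniformly on `W`;
(ii) Player 2 has a collection of strategies winning uniformly off `W`; and
in particular the value — the optimal probability with which Player 1 wins —
equals `∑_{(B,C) ∈ W} β(B)·γ(C)`. -/
theorem stmt_0 [Fintype V] (E : V → V → Prop) (hE : ∀ u : V, ∃ w : V, E u w)
    (d : ℕ) (idx : V → ℕ) (hidx : ∀ u : V, idx u ∈ Finset.Icc 1 d)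
    (v : V) (Th : ℝ) (hTh01 : Th ∈ Set.Icc (0 : ℝ) 1)
    (hThUp : ∀ B C : ℝ, 0 < B → 0 < C → Th < B / (B + C) →
      ∃ f : GStrat V, p1Legal E f B ∧ ∀ g : GStrat V, p2Legal E g C →
        P1Wins idx (fun m => gvtx f g v m))
    (hThLow : ∀ B C : ℝ, 0 < B → 0 < C → B / (B + C) ≤ Th →
      ∃ g : GStrat V, p2Legal E g C ∧ ∀ f : GStrat V, p1Legal E f B →
        ¬ P1Wins idx (fun m => gvtx f g v m))
    (β γ : BudgetDist)
    (W : Finset (ℝ × ℝ))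
    (hW : W = (β.supp ×ˢ γ.supp).filter fun p => Th < p.1 / (p.1 + p.2)) :
    (∃ F : ℝ → GStrat V, (∀ B ∈ β.supp, p1Legal E (F B) B) ∧
      ∀ G : ℝ → GStrat V, (∀ C ∈ γ.supp, p2Legal E (G C) C) →
        ∀ p ∈ W, P1Wins idx (fun m => gvtx (F p.1) (G p.2) v m)) ∧
    (∃ G : ℝ → GStrat V, (∀ C ∈ γ.supp, p2Legal E (G C) C) ∧
      ∀ F : ℝ → GStrat V, (∀ B ∈ β.supp, p1Legal E (F B) B) →
        ∀ p ∈ (β.supp ×ˢ γ.supp) \ W,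
          ¬ P1Wins idx (fun m => gvtx (F p.1) (G p.2) v m)) ∧
    (∃ F : ℝ → GStrat V, (∀ B ∈ β.supp, p1Legal E (F B) B) ∧
      ∀ G : ℝ → GStrat V, (∀ C ∈ γ.supp, p2Legal E (G C) C) →
        ∑ p ∈ W, β.prob p.1 * γ.prob p.2 ≤
          ∑ p ∈ β.supp ×ˢ γ.supp, β.prob p.1 * γ.prob p.2 *
            (if P1Wins idx (fun m => gvtx (F p.1) (G p.2) v m) then 1 else 0)) ∧
    (∃ G : ℝ → GStrat V, (∀ C ∈ γ.supp, p2Legal E (G C) C) ∧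
      ∀ F : ℝ → GStrat V, (∀ B ∈ β.supp, p1Legal E (F B) B) →
        ∑ p ∈ β.supp ×ˢ γ.supp, β.prob p.1 * γ.prob p.2 *
            (if P1Wins idx (fun m => gvtx (F p.1) (G p.2) v m) then 1 else 0) ≤
          ∑ p ∈ W, β.prob p.1 * γ.prob p.2) :=
  stmt_0_general E hE idx v Th hThUp hThLow β γ W hW

end
end

section
/- Let f : ℝ → ℝ be defined by f(x) = (1/2)·(x/(x + 1) + (1 − x)/(3 − x)). Then for every x ∈ [1/3, 1] we have f(x) ≤ (5 − 2·√2)/8, with equality at x = 4·√2 − 5 ∈ [1/3, 1]; that is, the maximum of f over [1/3, 1] equals (5 − 2·√2)/8. Moreover, (5 − 2·√2)/8 is strictly greater than 1/4. -/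
/-- for `f(x) = (1/2)·(x/(x+1) + (1-x)/(3-x))`, we have
`f(x) ≤ (5 - 2√2)/8` on `[1/3, 1]`, with equality at `x = 4√2 - 5 ∈ [1/3, 1]`;
the maximum of `f` over `[1/3, 1]` equals `(5 - 2√2)/8`, which is strictly
greater than `1/4`. -/
theorem stmt_14 (f : ℝ → ℝ)
    (hf : ∀ x : ℝ, f x = (1 / 2) * (x / (x + 1) + (1 - x) / (3 - x))) :
    (∀ x ∈ Set.Icc (1 / 3 : ℝ) 1, f x ≤ (5 - 2 * Real.sqrt 2) / 8) ∧
    (4 * Real.sqrt 2 - 5 ∈ Set.Icc (1 / 3 : ℝ) 1) ∧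
    f (4 * Real.sqrt 2 - 5) = (5 - 2 * Real.sqrt 2) / 8 ∧
    IsGreatest (f '' Set.Icc (1 / 3 : ℝ) 1) ((5 - 2 * Real.sqrt 2) / 8) ∧
    (1 / 4 : ℝ) < (5 - 2 * Real.sqrt 2) / 8 := by
  set s := Real.sqrt 2 with hs
  have hs2 : s ^ 2 = 2 := Real.sq_sqrt (by norm_num)
  have hs0 : 0 ≤ s := Real.sqrt_nonneg 2
  have hslb : (4 : ℝ) / 3 < s := by nlinarith
  have hsub : s < 3 / 2 := by nlinarith
  have hle : ∀ x ∈ Set.Icc (1 / 3 : ℝ) 1, f x ≤ (5 - 2 * s) / 8 := by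
    intro x hx
    obtain ⟨hx1, hx2⟩ := hx
    have h1 : (0 : ℝ) < x + 1 := by linarith
    have h3 : (0 : ℝ) < 3 - x := by linarith
    rw [hf]
    rw [div_add_div _ _ (ne_of_gt h1) (ne_of_gt h3)]
    rw [one_div, inv_mul_eq_div, div_div]
    rw [div_le_div_iff₀ (by positivity) (by norm_num : (0:ℝ) < 8)]
    nlinarith [sq_nonneg (x - (4 * s - 5)), mul_nonneg (mul_nonneg hs0 hs0) (sq_nonneg (x - (4 * s - 5))), hs2]
  have hmem : 4 * s - 5 ∈ Set.Icc (1 / 3 : ℝ) 1 := by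
    constructor <;> nlinarith
  have heq : f (4 * s - 5) = (5 - 2 * s) / 8 := by
    rw [hf]
    have h1 : (4 * s - 5) + 1 ≠ 0 := by nlinarith
    have h3 : 3 - (4 * s - 5) ≠ 0 := by nlinarith
    field_simp
    nlinarith [hs2, sq_nonneg s]
  refine ⟨hle, hmem, heq, ⟨⟨4 * s - 5, hmem, heq⟩, ?_⟩, by nlinarith⟩
  rintro y ⟨x, hx, rfl⟩
  exact hle x hx
end

section
/- Let n ≥ 1, let γ_1, …, γ_n > 0 with Σ_{j=1}^{n} γ_j = 1, let B > 0 and C_1, …, C_n > 0, and let x, y ≥ 0. Set P = Σ_{j=1}^{n} γ_j·B/(B + C_j). Assume P·(x + y) = x, x ≤ B, and x + y < B + C_j for every j. Then Σ_{j=1}^{n} γ_j·(B − x)/((B − x) + (C_j − y)) ≥ P. -/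
open Finset

/-- potential non-decrease, Property P4.  If
`P = ∑_j γ_j·B/(B + C_j)`, `P·(x + y) = x`, `x ≤ B` and `x + y < B + C_j` for
every `j`, then the potential of the remaining budgets is at least `P`:
`∑_j γ_j·(B − x)/((B − x) + (C_j − y)) ≥ P`. -/
theorem stmt_15 (n : ℕ) (hn : 1 ≤ n) (γ : Fin n → ℝ) (hγ : ∀ j, 0 < γ j)
    (hsum : ∑ j, γ j = 1) (B : ℝ) (hB : 0 < B) (C : Fin n → ℝ)
    (hC : ∀ j, 0 < C j) (x y : ℝ) (hx : 0 ≤ x) (hy : 0 ≤ y)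
    (hP : (∑ j, γ j * (B / (B + C j))) * (x + y) = x)
    (hxB : x ≤ B) (hxy : ∀ j, x + y < B + C j) :
    ∑ j, γ j * (B / (B + C j)) ≤
      ∑ j, γ j * ((B - x) / ((B - x) + (C j - y))) := by
  have hne : (univ : Finset (Fin n)).Nonempty := by
    have : Nonempty (Fin n) := Fin.pos_iff_nonempty.mp hn
    exact univ_nonempty
  have hBC : ∀ j, 0 < B + C j := fun j => by linarith [hC j]
  have hden : ∀ j, 0 < B + C j - (x + y) := fun j => by linarith [hxy j]
  rcases eq_or_lt_of_le (show (0:ℝ) ≤ x + y by linarith) with h0 | hs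
  · have hx0 : x = 0 := by linarith
    have hy0 : y = 0 := by linarith
    simp [hx0, hy0]
  · -- x < B
    have hxlt : x < B := by
      rw [← hP]
      calc (∑ j, γ j * (B / (B + C j))) * (x + y)
          = ∑ j, γ j * (B * (x + y) / (B + C j)) := by
            rw [sum_mul]; congr 1; ext j; field_simp
        _ < ∑ j, γ j * B := by
            apply sum_lt_sum_of_nonempty hne
            intro j _
            have : B * (x + y) / (B + C j) < B := by
              rw [div_lt_iff₀ (hBC j)]
              nlinarith [hden j]
            exact mul_lt_mul_of_pos_left this (hγ j)
        _ = B := by rw [← sum_mul, hsum, one_mul]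
    have hBx : (0:ℝ) < B - x := sub_pos.mpr hxlt
    set s := x + y with hsdef
    clear_value s
    set t : Fin n → ℝ := fun j => B - B / (B + C j) * s with htdef
    have ht : ∀ j, 0 < t j := by
      intro j
      have : B / (B + C j) * s < B := by
        rw [div_mul_eq_mul_div, div_lt_iff₀ (hBC j)]
        nlinarith [hden j]
      simpa [htdef] using sub_pos.mpr this
    have hsumt : ∑ j, γ j * t j = B - x := by
      have h : ∀ j ∈ univ, γ j * t j = γ j * B - γ j * (B / (B + C j)) * s := by
        intro j _; simp only [htdef]; ring
      rw [sum_congr rfl h, sum_sub_distrib, ← sum_mul, hsum, one_mul]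
      have : ∑ j, γ j * (B / (B + C j)) * s = (∑ j, γ j * (B / (B + C j))) * s :=
        (sum_mul _ _ _).symm
      rw [this, hP]
    have hconv : ConvexOn ℝ (Set.Ioi (0:ℝ)) fun z : ℝ => z ^ (-1 : ℤ) :=
      (strictConvexOn_zpow (by norm_num) (by norm_num)).convexOn
    have hjen : (B - x)⁻¹ ≤ ∑ j, γ j * (t j)⁻¹ := by
      have := hconv.map_sum_le (t := univ) (w := γ) (p := t)
        (fun j _ => (hγ j).le) hsum (fun j _ => ht j)
      simp only [smul_eq_mul, zpow_neg_one] at this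
      calc (B - x)⁻¹ = (∑ j, γ j * t j)⁻¹ := by rw [hsumt]
        _ ≤ ∑ j, γ j * (t j)⁻¹ := this
    have hterm : ∀ j, (B - x) / ((B - x) + (C j - y)) = (B - x) / s * (B * (t j)⁻¹ - 1) := by
      intro j
      have h1 : (B - x) + (C j - y) = B + C j - s := by rw [hsdef]; ring
      have h2 : t j = B * (B + C j - s) / (B + C j) := by
        rw [htdef, eq_div_iff (hBC j).ne']
        field_simp [(hBC j).ne']
      rw [h1, h2]
      field_simp [hs.ne', (hden j).ne', (hBC j).ne', hB.ne']
      ring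
    have hPs : (∑ j, γ j * (B / (B + C j))) = x / s := by
      rw [eq_div_iff hs.ne', hP]
    rw [hPs]
    calc x / s = (B - x) / s * (B * (B - x)⁻¹ - 1) := by
          field_simp
          ring
      _ ≤ (B - x) / s * (B * (∑ j, γ j * (t j)⁻¹) - 1) := by
          apply mul_le_mul_of_nonneg_left _ (div_nonneg hBx.le hs.le)
          have : B * (B - x)⁻¹ ≤ B * ∑ j, γ j * (t j)⁻¹ :=
            mul_le_mul_of_nonneg_left hjen hB.le
          linarith
      _ = ∑ j, γ j * ((B - x) / s * (B * (t j)⁻¹ - 1)) := by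
          have h : ∑ j, γ j * ((B - x) / s * (B * (t j)⁻¹ - 1))
              = (B - x) / s * B * (∑ j, γ j * (t j)⁻¹) - (B - x) / s * (∑ j, γ j) := by
            rw [mul_sum, mul_sum, ← sum_sub_distrib]
            exact sum_congr rfl fun j _ => by ring
          rw [h, hsum]
          ring
      _ = ∑ j, γ j * ((B - x) / ((B - x) + (C j - y))) := by
          exact sum_congr rfl fun j _ => by rw [hterm j]
end
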